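/- Fix an integer m ≥ 1, positive reals τ and h_0, …, h_{m−1}, and reals a_i, b_i, c_i, f_i, p_i for i = 0, …, m−1, and reals g, G. Then a vector (u_0, …, u_m) ∈ ℝ^{m+1} satisfies the summation identity Σ_{i=0}^{m−1} h_i [ a_i ((u_{i+1}−u_i)/h_i)((η_{i+1}−η_i)/h_i) − b_i ((u_{i+1}−u_i)/h_i) η_i − c_i u_i η_i + f_i η_i + ((u_i − p_i)/τ) η_i ] + G η_m + g η_0 = 0 for ALL (η_0, …, η_m) ∈ ℝ^{m+1} if and only if (u_0, …, u_m) solves the system of m+1 linear equations: (i) [a_0 + h_0 b_0 − h_0² c_0 + h_0²/τ] u_0 − [a_0 + h_0 b_0] u_1 = (h_0²/τ) p_0 − h_0² f_0 − h_0 g; (ii) for each i = 1, …, m−1: −a_{i−1} h_i u_{i−1} + [a_{i−1} h_i + a_i h_{i−1} + b_i h_i h_{i−1} − c_i h_i² h_{i−1} + h_i² h_{i−1}/τ] u_i − [a_i h_{i−1} + b_i h_i h_{i−1}] u_{i+1} = −h_i² h_{i−1} f_i + (h_i² h_{i−1}/τ) p_i; (iii) −a_{m−1} u_{m−1} + a_{m−1}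 u_m = −h_{m−1} G. -/

import Mathlib

/-!
With the discrete flux `T i = a_i (u_{i+1} - u_i) / h_i` and the lower-order part `D i`, the form is
`∑ i, (T i (η_{i+1} - η_i) + D i η_i) + G η_m + g η_0`, and summation by parts turns it into
`∑ k, R k η_k` with residuals `R 0 = D 0 - T 0 + g`, `R k = T (k-1) - T k + D k` and
`R m = T (m-1) + G`. Such a linear form vanishes for every `η` iff every residual vanishes, and
each residual equation, scaled by a product of mesh steps, is a row of the tridiagonal system.
-/

open Finset

lemma sum_range_succ_mul_sub_add_mul {R : Type*} [CommRing R] (T D η : ℕ → R) (n : ℕ) :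
    ∑ i ∈ range (n + 1), (T i * (η (i + 1) - η i) + D i * η i)
      = (D 0 - T 0) * η 0 + ∑ i ∈ range n, (T i - T (i + 1) + D (i + 1)) * η (i + 1)
        + T n * η (n + 1) := by
  induction n with
  | zero => rw [sum_range_one, sum_range_zero]; ring
  | succ n ih => rw [sum_range_succ, ih, sum_range_succ]; ring

lemma forall_boundary_sum_eq_zero_iff {R : Type*} [CommRing R] [LinearOrder R] [IsStrictOrderedRing R]
    {F : (ℕ → R) → R} {x z : R} {y : ℕ → R} {n : ℕ}
    (hF : ∀ η, F η = x * η 0 + ∑ i ∈ range n, y i * η (i + 1) + z * η (n + 1)) :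
    (∀ η, F η = 0) ↔ x = 0 ∧ (∀ i < n, y i = 0) ∧ z = 0 := by
  constructor
  · intro H
    -- test against the residual vector itself
    have hsq : x ^ 2 + ∑ i ∈ range n, y i ^ 2 + z ^ 2 = 0 := by
      rw [← H fun k => if k = 0 then x else if k = n + 1 then z else y (k - 1), hF]
      have hy : ∀ i ∈ range n, y i * (if i + 1 = 0 then x else if i + 1 = n + 1 then z
          else y (i + 1 - 1)) = y i ^ 2 := fun i hi => by
        rw [if_neg i.succ_ne_zero, if_neg (by simpa using (mem_range.1 hi).ne), sq,
          Nat.add_sub_cancel]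
      simp only [sum_congr rfl hy, if_pos, if_neg n.succ_ne_zero]
      ring
    have hS : 0 ≤ ∑ i ∈ range n, y i ^ 2 := sum_nonneg fun i _ => sq_nonneg (y i)
    have hx : x ^ 2 = 0 := by linarith [sq_nonneg x, sq_nonneg z]
    have hz : z ^ 2 = 0 := by linarith [sq_nonneg x, sq_nonneg z]
    have hS0 : ∑ i ∈ range n, y i ^ 2 = 0 := by linarith
    refine ⟨pow_eq_zero_iff two_ne_zero |>.1 hx, fun i hi => ?_,
      pow_eq_zero_iff two_ne_zero |>.1 hz⟩
    exact pow_eq_zero_iff two_ne_zero |>.1 <|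
      (sum_eq_zero_iff_of_nonneg fun i _ => sq_nonneg (y i)).1 hS0 i (mem_range.2 hi)
  · rintro ⟨rfl, hy, rfl⟩ η
    rw [hF, sum_eq_zero fun i hi => by rw [hy i (mem_range.1 hi), zero_mul]]
    ring

lemma eq_zero_iff_of_mul_eq_sub {R : Type*} [Ring R] [NoZeroDivisors R] {s x A B : R}
    (hs : s ≠ 0) (H : s * x = A - B) : x = 0 ↔ A = B := by
  rw [← sub_eq_zero (a := A), ← H, mul_eq_zero, or_iff_right hs]

namespace DiscreteStefan

variable (τ : ℝ) (h a b c f p u : ℕ → ℝ)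

noncomputable def flux (i : ℕ) : ℝ := a i * (u (i + 1) - u i) / h i

noncomputable def lowerOrder (i : ℕ) : ℝ :=
    h i * (f i + (u i - p i) / τ - c i * u i) - b i * (u (i + 1) - u i)

variable {τ h a b c f p u}

lemma summand_eq {i : ℕ} (hi : h i ≠ 0) (η : ℕ → ℝ) :
    h i * (a i * ((u (i + 1) - u i) / h i) * ((η (i + 1) - η i) / h i)
        - b i * ((u (i + 1) - u i) / h i) * η i
        - c i * u i * η i
        + f i * η i
        + ((u i - p i) / τ) * η i)
      = flux h a u i * (η (i + 1) - η i) + lowerOrder τ h b c f p u i * η i := by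
  unfold flux lowerOrder
  field_simp
  ring

lemma left_residual_eq_zero_iff (g : ℝ) (h0 : h 0 ≠ 0) :
    lowerOrder τ h b c f p u 0 - flux h a u 0 + g = 0 ↔
      (a 0 + h 0 * b 0 - h 0 ^ 2 * c 0 + h 0 ^ 2 / τ) * u 0 - (a 0 + h 0 * b 0) * u 1
        = (h 0 ^ 2 / τ) * p 0 - h 0 ^ 2 * f 0 - h 0 * g :=
  eq_zero_iff_of_mul_eq_sub h0 (by unfold flux lowerOrder; field_simp; ring)

lemma interior_residual_eq_zero_iff {j : ℕ} (hj : h j ≠ 0) (hj1 : h (j + 1) ≠ 0) :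
    flux h a u j - flux h a u (j + 1) + lowerOrder τ h b c f p u (j + 1) = 0 ↔
      -(a j * h (j + 1)) * u j
          + (a j * h (j + 1) + a (j + 1) * h j + b (j + 1) * h (j + 1) * h j
              - c (j + 1) * h (j + 1) ^ 2 * h j + h (j + 1) ^ 2 * h j / τ) * u (j + 1)
          - (a (j + 1) * h j + b (j + 1) * h (j + 1) * h j) * u (j + 1 + 1)
        = -(h (j + 1) ^ 2 * h j) * f (j + 1) + (h (j + 1) ^ 2 * h j / τ) * p (j + 1) :=
  eq_zero_iff_of_mul_eq_sub (mul_ne_zero hj1 hj) (by unfold flux lowerOrder; field_simp; ring)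

lemma right_residual_eq_zero_iff (G : ℝ) {n : ℕ} (hn : h n ≠ 0) :
    flux h a u n + G = 0 ↔ -(a n) * u n + a n * u (n + 1) = -(h n) * G :=
  eq_zero_iff_of_mul_eq_sub hn (by unfold flux; field_simp; ring)

end DiscreteStefan

open DiscreteStefan in
theorem stmt_0_general (m : ℕ) (hm : 1 ≤ m) (τ : ℝ)
    (h a b c f p : ℕ → ℝ) (hh : ∀ i, i < m → 0 < h i)
    (g G : ℝ) (u : ℕ → ℝ) :
    (∀ η : ℕ → ℝ,
        (∑ i ∈ Finset.range m,
            h i * (a i * ((u (i + 1) - u i) / h i) * ((η (i + 1) - η i) / h i)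
              - b i * ((u (i + 1) - u i) / h i) * η i
              - c i * u i * η i
              + f i * η i
              + ((u i - p i) / τ) * η i))
          + G * η m + g * η 0 = 0)
    ↔ ((a 0 + h 0 * b 0 - h 0 ^ 2 * c 0 + h 0 ^ 2 / τ) * u 0
          - (a 0 + h 0 * b 0) * u 1
          = (h 0 ^ 2 / τ) * p 0 - h 0 ^ 2 * f 0 - h 0 * g)
      ∧ (∀ i, 1 ≤ i → i ≤ m - 1 →
          -(a (i - 1) * h i) * u (i - 1)
            + (a (i - 1) * h i + a i * h (i - 1) + b i * h i * h (i - 1)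
                - c i * h i ^ 2 * h (i - 1) + h i ^ 2 * h (i - 1) / τ) * u i
            - (a i * h (i - 1) + b i * h i * h (i - 1)) * u (i + 1)
          = -(h i ^ 2 * h (i - 1)) * f i + (h i ^ 2 * h (i - 1) / τ) * p i)
      ∧ (-(a (m - 1)) * u (m - 1) + a (m - 1) * u m = -(h (m - 1)) * G) := by
  obtain ⟨n, rfl⟩ : ∃ n, m = n + 1 := ⟨m - 1, by omega⟩
  have hne : ∀ i ≤ n, h i ≠ 0 := fun i hi => (hh i (by omega)).ne'
  rw [forall_boundary_sum_eq_zero_iff (x := lowerOrder τ h b c f p u 0 - flux h a u 0 + g)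
    (y := fun i => flux h a u i - flux h a u (i + 1) + lowerOrder τ h b c f p u (i + 1))
    (z := flux h a u n + G) fun η => by
    rw [sum_congr rfl fun i hi => summand_eq (hne i (Nat.lt_succ_iff.1 (mem_range.1 hi))) η,
      sum_range_succ_mul_sub_add_mul]
    ring]
  simp only [Nat.add_sub_cancel]
  refine and_congr (left_residual_eq_zero_iff g (hne 0 n.zero_le))
    (and_congr ?_ (right_residual_eq_zero_iff G (hne n le_rfl)))
  refine ⟨fun H i hi hin => ?_, fun H j hj => ?_⟩
  · obtain ⟨j, rfl⟩ : ∃ j, i = j + 1 := ⟨i - 1, by omega⟩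
    simpa using
      (interior_residual_eq_zero_iff (hne j (by omega)) (hne (j + 1) hin)).1 (H j (by omega))
  · simpa using (interior_residual_eq_zero_iff (hne j (by omega)) (hne (j + 1) (by omega))).2
      (H (j + 1) (by omega) (by omega))

/-- The summation identity (discrete weak formulation) holds for all test
vectors `η` iff the discrete state vector `u` solves the tridiagonal linear system. -/
theorem stmt_0 (m : ℕ) (hm : 1 ≤ m) (τ : ℝ) (hτ : 0 < τ)
    (h a b c f p : ℕ → ℝ) (hh : ∀ i, i < m → 0 < h i)
    (g G : ℝ) (u : ℕ → ℝ) :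
    (∀ η : ℕ → ℝ,
        (∑ i ∈ Finset.range m,
            h i * (a i * ((u (i + 1) - u i) / h i) * ((η (i + 1) - η i) / h i)
              - b i * ((u (i + 1) - u i) / h i) * η i
              - c i * u i * η i
              + f i * η i
              + ((u i - p i) / τ) * η i))
          + G * η m + g * η 0 = 0)
    ↔ ((a 0 + h 0 * b 0 - h 0 ^ 2 * c 0 + h 0 ^ 2 / τ) * u 0
          - (a 0 + h 0 * b 0) * u 1
          = (h 0 ^ 2 / τ) * p 0 - h 0 ^ 2 * f 0 - h 0 * g)
      ∧ (∀ i, 1 ≤ i → i ≤ m - 1 →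
          -(a (i - 1) * h i) * u (i - 1)
            + (a (i - 1) * h i + a i * h (i - 1) + b i * h i * h (i - 1)
                - c i * h i ^ 2 * h (i - 1) + h i ^ 2 * h (i - 1) / τ) * u i
            - (a i * h (i - 1) + b i * h i * h (i - 1)) * u (i + 1)
          = -(h i ^ 2 * h (i - 1)) * f i + (h i ^ 2 * h (i - 1) / τ) * p i)
      ∧ (-(a (m - 1)) * u (m - 1) + a (m - 1) * u m = -(h (m - 1)) * G) :=
  stmt_0_general m hm τ h a b c f p hh g G u
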